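/- Let (P(q))_{q=Q,…,R} be a finite family of square-integrable real random variables such that E[(P(U) − P(L))²] ≤ C·(U−L) for all Q ≤ L ≤ U ≤ R. Then for every ζ > 0 there is a constant C_ζ depending only on ζ such that E[max_{Q ≤ q ≤ R} (P(q) − P(Q))²] ≤ C · C_ζ · (R−Q)^{1+ζ}. -/

import Mathlib

open MeasureTheory

private lemma sq_split (δ a b : ℝ) (hδ : 0 < δ) :
    (a + b) ^ 2 ≤ (1 + δ) * a ^ 2 + (1 + 1/δ) * b ^ 2 := by
  have he : δ * (1/δ) = 1 := by field_simp
  nlinarith [sq_nonneg (δ * a - b), sq_nonneg (a - b), hδ, sq_nonneg a, sq_nonneg b,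
    mul_pos hδ hδ]

private lemma integrable_finset_sup' {Ω : Type} [MeasureSpace Ω] {ι : Type}
    {s : Finset ι} (hs : s.Nonempty) (f : ι → Ω → ℝ)
    (hf : ∀ i ∈ s, Integrable (f i)) :
    Integrable (fun ω => s.sup' hs (fun i => f i ω)) := by
  revert hf
  induction hs using Finset.Nonempty.cons_induction with
  | singleton a =>
      intro hf
      have := hf a (Finset.mem_singleton_self a)
      simp only [Finset.sup'_singleton]
      exact this
  | cons a s h hs ih =>
      intro hf
      simp only [Finset.sup'_cons hs]
      exact (hf a (by simp)).sup (ih fun i hi => hf i (Finset.mem_cons_of_mem hi))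

private lemma integrable_sq_sub {Ω : Type} [MeasureSpace Ω] {f g : Ω → ℝ}
    (hf : MemLp f 2 volume) (hg : MemLp g 2 volume) :
    Integrable (fun ω => (f ω - g ω) ^ 2) := by
  simpa using (hf.sub hg).integrable_sq

private lemma one_add_inv_rpow_le (θ δ : ℝ) (hθ : 0 < θ) (hδ : 0 < δ) (n : ℝ)
    (hn : θ / Real.log (1 + δ/2) ≤ n) (hn0 : 0 < n) :
    (1 + 1/n) ^ θ ≤ 1 + δ/2 := by
  have hlog : 0 < Real.log (1 + δ/2) := Real.log_pos (by linarith)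
  have h1 : (1:ℝ) + 1/n ≤ Real.exp (1/n) := by
    have := Real.add_one_le_exp (1/n); linarith
  have h2 : (1 + 1/n) ^ θ ≤ (Real.exp (1/n)) ^ θ :=
    Real.rpow_le_rpow (by positivity) h1 hθ.le
  have h3 : (Real.exp (1/n)) ^ θ = Real.exp (1/n * θ) := by
    rw [Real.rpow_def_of_pos (Real.exp_pos _), Real.log_exp]
  have h4 : 1/n * θ ≤ Real.log (1 + δ/2) := by
    rw [div_le_iff₀ hlog] at hn
    rw [div_mul_eq_mul_div, mul_comm, div_le_iff₀ hn0]
    linarith [hn]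
  calc (1 + 1/n) ^ θ ≤ Real.exp (1/n * θ) := h3 ▸ h2
    _ ≤ Real.exp (Real.log (1 + δ/2)) := Real.exp_le_exp.mpr h4
    _ = 1 + δ/2 := Real.exp_log (by linarith)

private lemma key_arith (θ δ K A n x y : ℝ)
    (hθ : 1 < θ) (hδ : 0 < δ) (hδ2 : 2 * δ = 2 ^ θ - 2)
    (hn1 : 1 ≤ n)
    (h1n : (1 + 1/n) ^ θ ≤ 1 + δ/2)
    (hx0 : 0 ≤ x) (hy0 : 0 ≤ y)
    (hx : x ≤ (n + 1)/2) (hy : y ≤ n/2)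
    (hA : 2 * (K + 1) * 2 ^ θ / δ ≤ A) (hK : 0 ≤ K) :
    A * x ^ θ + (1 + δ) * A * y ^ θ + K * x ≤ A * n ^ θ := by
  have hn0 : (0:ℝ) < n := by linarith
  have hs0 : (0:ℝ) < 2 ^ θ := Real.rpow_pos_of_pos two_pos θ
  have hA0 : 0 < A := lt_of_lt_of_le (by positivity) hA
  have hT0 : 0 < n ^ θ := Real.rpow_pos_of_pos hn0 θ
  set s : ℝ := 2 ^ θ with hs
  set T : ℝ := n ^ θ with hT
  -- (n+1)/2 = (n/2) * (1 + 1/n)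
  have hsplit : (n + 1)/2 = (n/2) * (1 + 1/n) := by field_simp
  have hhalf : (n/2 : ℝ) ^ θ = T / s := by
    rw [hT, hs, Real.div_rpow hn0.le (by norm_num : (0:ℝ) ≤ 2)]
  have hxθ : x ^ θ ≤ (T/s) * (1 + δ/2) := by
    calc x ^ θ ≤ ((n+1)/2) ^ θ := Real.rpow_le_rpow hx0 hx (by linarith)
      _ = (n/2) ^ θ * (1 + 1/n) ^ θ := by
          rw [hsplit, Real.mul_rpow (by positivity) (by positivity)]
      _ ≤ (T/s) * (1 + δ/2) := by
          rw [hhalf]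
          exact mul_le_mul_of_nonneg_left h1n (by positivity)
  have hyθ : y ^ θ ≤ T/s := by
    calc y ^ θ ≤ (n/2) ^ θ := Real.rpow_le_rpow hy0 hy (by linarith)
      _ = T/s := hhalf
  have hxn : x ≤ n := by linarith
  have hnT : n ≤ T := by
    calc n = n ^ (1:ℝ) := (Real.rpow_one n).symm
      _ ≤ n ^ θ := Real.rpow_le_rpow_of_exponent_le hn1 hθ.le
  have hu : T / s * s = T := div_mul_cancel₀ T hs0.ne'
  have hKs : 2 * (K + 1) * s ≤ A * δ := by
    rw [div_le_iff₀ hδ] at hA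
    linarith
  have hKx : K * x ≤ K * T := mul_le_mul_of_nonneg_left (le_trans hxn hnT) hK
  have e1 : A * x ^ θ ≤ A * ((T/s) * (1 + δ/2)) :=
    mul_le_mul_of_nonneg_left hxθ hA0.le
  have e2 : (1 + δ) * A * y ^ θ ≤ (1 + δ) * A * (T/s) :=
    mul_le_mul_of_nonneg_left hyθ (by positivity)
  -- final: A*(T/s)*(1+δ/2) + (1+δ)*A*(T/s) + K*T ≤ A*T, using s = 2+2δ
  have hs2 : s = 2 + 2 * δ := by rw [hs]; linarith [hδ2]
  have hu0 : 0 < T / s := div_pos hT0 hs0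
  set u : ℝ := T / s with hu'
  have hT' : T = u * s := by rw [hu']; field_simp
  have hKs' : 2 * (K + 1) * (2 + 2 * δ) ≤ A * δ := hs2 ▸ hKs
  have final : A * (u * (1 + δ/2)) + (1 + δ) * A * u + K * T ≤ A * T := by
    rw [hT', hs2]
    nlinarith [mul_le_mul_of_nonneg_right hKs' hu0.le, hu0.le, hK, hδ.le,
      mul_nonneg hK hu0.le, mul_nonneg (mul_nonneg hK hδ.le) hu0.le]
  have step : A * x ^ θ + (1 + δ) * A * y ^ θ + K * x
      ≤ A * (u * (1 + δ/2)) + (1 + δ) * A * u + K * T := by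
    have e1' : A * x ^ θ ≤ A * (u * (1 + δ / 2)) := e1
    linarith [e1', e2, hKx]
  linarith [step, final]

set_option maxHeartbeats 1000000 in
private lemma moricz_aux (θ δ K A : ℝ) (N : ℕ)
    (hθ : 1 < θ) (hδ : 0 < δ) (hδ2 : 2 * δ = 2 ^ θ - 2)
    (hK : K = 1 + 1/δ) (hN1 : 1 ≤ N)
    (hNbound : ∀ n : ℕ, N < n → (1 + 1/(n:ℝ)) ^ θ ≤ 1 + δ/2)
    (hA1 : 2 * (K + 1) * 2 ^ θ / δ ≤ A)
    (hA2 : 2 * (N:ℝ) + 2 ≤ A) :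
    ∀ n : ℕ, ∀ (Ω : Type) (_ : MeasureSpace Ω)
      (P : ℕ → Ω → ℝ) (Q : ℕ) (C : ℝ),
      (∀ q, Q ≤ q → q ≤ Q + n → MemLp (P q) 2 volume) →
      (∀ L U, Q ≤ L → L ≤ U → U ≤ Q + n →
        (∫ ω, (P U ω - P L ω) ^ 2) ≤ C * ((U : ℝ) - (L : ℝ))) →
      (∫ ω, (Finset.Icc Q (Q + n)).sup' (Finset.nonempty_Icc.mpr (Nat.le_add_right Q n))
          (fun q => (P q ω - P Q ω) ^ 2)) ≤ C * A * (n : ℝ) ^ θ := by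
  intro n
  induction n using Nat.strong_induction_on with
  | _ n ih =>
  intro Ω _ P Q C hmem hinc
  have hK0 : 0 ≤ K := by rw [hK]; positivity
  rcases Nat.eq_zero_or_pos n with rfl | hn0
  · have hz : ((0:ℕ):ℝ) ^ θ = 0 := by
      rw [Nat.cast_zero]; exact Real.zero_rpow (lt_trans zero_lt_one hθ).ne'
    rw [hz, mul_zero]
    have hfun : (fun ω : Ω => (Finset.Icc Q (Q+0)).sup'
        (Finset.nonempty_Icc.mpr (Nat.le_add_right Q 0))
        (fun q => (P q ω - P Q ω) ^ 2)) = fun _ => (0:ℝ) := by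
      funext ω
      simp
    rw [hfun, integral_zero]
  have hC0 : 0 ≤ C := by
    have h1 := hinc Q (Q + n) le_rfl (Nat.le_add_right _ _) le_rfl
    have h2 : (0:ℝ) ≤ ∫ ω, (P (Q + n) ω - P Q ω) ^ 2 :=
      integral_nonneg fun ω => sq_nonneg _
    have h3 : ((Q + n : ℕ) : ℝ) - (Q : ℝ) = (n : ℝ) := by push_cast; ring
    rw [h3] at h1
    have h4 : (0:ℝ) < n := by exact_mod_cast hn0
    nlinarith
  have hn1R : (1:ℝ) ≤ (n:ℝ) := by exact_mod_cast hn0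
  have hnθ : (n:ℝ) ≤ (n:ℝ) ^ θ := by
    calc (n:ℝ) = (n:ℝ) ^ (1:ℝ) := (Real.rpow_one _).symm
      _ ≤ (n:ℝ) ^ θ := Real.rpow_le_rpow_of_exponent_le hn1R hθ.le
  have hmemQ := hmem Q le_rfl (Nat.le_add_right _ _)
  have hFint : ∀ q ∈ Finset.Icc Q (Q+n), Integrable (fun ω => (P q ω - P Q ω)^2) :=
    fun q hq => integrable_sq_sub (hmem q (Finset.mem_Icc.mp hq).1 (Finset.mem_Icc.mp hq).2) hmemQ
  by_cases hnN : n ≤ N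
  · -- crude bound via sum
    have h1 : (∫ ω, (Finset.Icc Q (Q+n)).sup' (Finset.nonempty_Icc.mpr (Nat.le_add_right Q n))
          (fun q => (P q ω - P Q ω) ^ 2))
        ≤ ∫ ω, ∑ q ∈ Finset.Icc Q (Q+n), (P q ω - P Q ω)^2 := by
      apply integral_mono (integrable_finset_sup' _ _ hFint) (integrable_finset_sum _ hFint)
      intro ω
      apply Finset.sup'_le
      intro q hq
      exact Finset.single_le_sum (f := fun q => (P q ω - P Q ω)^2) (fun i _ => sq_nonneg _) hq
    rw [integral_finset_sum _ hFint] at h1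
    have h2 : ∑ q ∈ Finset.Icc Q (Q+n), ∫ ω, (P q ω - P Q ω)^2
        ≤ ∑ _q ∈ Finset.Icc Q (Q+n), C * (n:ℝ) := by
      apply Finset.sum_le_sum
      intro q hq
      obtain ⟨hq1, hq2⟩ := Finset.mem_Icc.mp hq
      calc ∫ ω, (P q ω - P Q ω)^2 ≤ C * ((q:ℝ) - (Q:ℝ)) := hinc Q q le_rfl hq1 hq2
        _ ≤ C * (n:ℝ) := by
            apply mul_le_mul_of_nonneg_left _ hC0
            have : (q:ℝ) ≤ (Q:ℝ) + (n:ℝ) := by exact_mod_cast hq2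
            linarith
    rw [Finset.sum_const, Nat.card_Icc] at h2
    have hcard : Q + n + 1 - Q = n + 1 := by omega
    rw [hcard, nsmul_eq_mul] at h2
    have hA0 : (0:ℝ) ≤ A := by
      have : (0:ℝ) ≤ (N:ℝ) := Nat.cast_nonneg _
      linarith
    have hNc : (n:ℝ) ≤ (N:ℝ) := by exact_mod_cast hnN
    have hfin : ((n+1 : ℕ):ℝ) * (C * (n:ℝ)) ≤ C * A * (n:ℝ)^θ := by
      push_cast
      have hstep : ((n:ℝ)+1) * (n:ℝ) ≤ A * (n:ℝ) := by nlinarith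
      have h5 : A * (n:ℝ) ≤ A * (n:ℝ)^θ := mul_le_mul_of_nonneg_left hnθ hA0
      nlinarith
    linarith
  · push_neg at hnN
    have hn2 : 2 ≤ n := by omega
    have hn2lt : n / 2 < n := by omega
    have hn1lt : n - n / 2 < n := by omega
    set n2 := n / 2 with hn2def
    set n1 := n - n2 with hn1def
    have hsum : n1 + n2 = n := by omega
    have hmemm := hmem (Q + n1) (Nat.le_add_right _ _) (by omega)
    have hF1int : ∀ q ∈ Finset.Icc Q (Q+n1), Integrable (fun ω => (P q ω - P Q ω)^2) := by
      intro q hq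
      obtain ⟨hq1, hq2⟩ := Finset.mem_Icc.mp hq
      exact integrable_sq_sub (hmem q hq1 (by omega)) hmemQ
    have hGint : ∀ q ∈ Finset.Icc (Q+n1) (Q+n1+n2),
        Integrable (fun ω => (P q ω - P (Q+n1) ω)^2) := by
      intro q hq
      obtain ⟨hq1, hq2⟩ := Finset.mem_Icc.mp hq
      exact integrable_sq_sub (hmem q (by omega) (by omega)) hmemm
    have hS := integrable_finset_sup' (Finset.nonempty_Icc.mpr (Nat.le_add_right Q n)) _ hFint
    have hS1 := integrable_finset_sup' (Finset.nonempty_Icc.mpr (Nat.le_add_right Q n1)) _ hF1int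
    have hS2 := integrable_finset_sup' (Finset.nonempty_Icc.mpr (Nat.le_add_right (Q+n1) n2)) _ hGint
    have hcint : Integrable (fun ω => (P (Q+n1) ω - P Q ω)^2) := integrable_sq_sub hmemm hmemQ
    have hpt : ∀ ω, (Finset.Icc Q (Q+n)).sup' (Finset.nonempty_Icc.mpr (Nat.le_add_right Q n))
          (fun q => (P q ω - P Q ω)^2)
        ≤ (Finset.Icc Q (Q+n1)).sup' (Finset.nonempty_Icc.mpr (Nat.le_add_right Q n1))
            (fun q => (P q ω - P Q ω)^2)
          + ((1+δ) * (Finset.Icc (Q+n1) (Q+n1+n2)).sup'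
              (Finset.nonempty_Icc.mpr (Nat.le_add_right (Q+n1) n2))
              (fun q => (P q ω - P (Q+n1) ω)^2)
            + K * (P (Q+n1) ω - P Q ω)^2) := by
      intro ω
      have hS1nn : (0:ℝ) ≤ (Finset.Icc Q (Q+n1)).sup'
          (Finset.nonempty_Icc.mpr (Nat.le_add_right Q n1)) (fun q => (P q ω - P Q ω)^2) := by
        have := Finset.le_sup' (fun q => (P q ω - P Q ω)^2)
          (Finset.mem_Icc.mpr ⟨le_rfl, Nat.le_add_right Q n1⟩)
        exact le_trans (by simp) this
      have hS2nn : (0:ℝ) ≤ (Finset.Icc (Q+n1) (Q+n1+n2)).sup'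
          (Finset.nonempty_Icc.mpr (Nat.le_add_right (Q+n1) n2))
          (fun q => (P q ω - P (Q+n1) ω)^2) := by
        have := Finset.le_sup' (fun q => (P q ω - P (Q+n1) ω)^2)
          (Finset.mem_Icc.mpr ⟨le_rfl, Nat.le_add_right (Q+n1) n2⟩)
        exact le_trans (by simp) this
      have hcnn : (0:ℝ) ≤ (P (Q+n1) ω - P Q ω)^2 := sq_nonneg _
      apply Finset.sup'_le
      intro q hq
      obtain ⟨hq1, hq2⟩ := Finset.mem_Icc.mp hq
      by_cases hqm : q ≤ Q + n1
      · have hle : (P q ω - P Q ω)^2 ≤ (Finset.Icc Q (Q+n1)).sup'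
            (Finset.nonempty_Icc.mpr (Nat.le_add_right Q n1)) (fun q => (P q ω - P Q ω)^2) :=
          Finset.le_sup' (fun q => (P q ω - P Q ω)^2) (Finset.mem_Icc.mpr ⟨hq1, hqm⟩)
        nlinarith [mul_nonneg (by linarith : (0:ℝ) ≤ 1+δ) hS2nn, mul_nonneg hK0 hcnn]
      · push_neg at hqm
        have hsplit0 : P q ω - P Q ω = (P q ω - P (Q+n1) ω) + (P (Q+n1) ω - P Q ω) := by ring
        have hkey := sq_split δ (P q ω - P (Q+n1) ω) (P (Q+n1) ω - P Q ω) hδ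
        rw [← hsplit0] at hkey
        have hle2 : (P q ω - P (Q+n1) ω)^2 ≤ (Finset.Icc (Q+n1) (Q+n1+n2)).sup'
            (Finset.nonempty_Icc.mpr (Nat.le_add_right (Q+n1) n2))
            (fun q => (P q ω - P (Q+n1) ω)^2) :=
          Finset.le_sup' (fun q => (P q ω - P (Q+n1) ω)^2) (Finset.mem_Icc.mpr ⟨by omega, by omega⟩)
        have hKeq : 1 + 1/δ = K := hK.symm
        nlinarith [mul_le_mul_of_nonneg_left hle2 (by linarith : (0:ℝ) ≤ 1+δ), sq_nonneg (P q ω - P (Q+n1) ω)]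
    have hRHSint : Integrable (fun ω =>
        (Finset.Icc Q (Q+n1)).sup' (Finset.nonempty_Icc.mpr (Nat.le_add_right Q n1))
          (fun q => (P q ω - P Q ω)^2)
        + ((1+δ) * (Finset.Icc (Q+n1) (Q+n1+n2)).sup'
            (Finset.nonempty_Icc.mpr (Nat.le_add_right (Q+n1) n2))
            (fun q => (P q ω - P (Q+n1) ω)^2)
          + K * (P (Q+n1) ω - P Q ω)^2)) :=
      hS1.add ((hS2.const_mul _).add (hcint.const_mul _))
    have hg2 : Integrable (fun ω => (1+δ) * (Finset.Icc (Q+n1) (Q+n1+n2)).sup'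
        (Finset.nonempty_Icc.mpr (Nat.le_add_right (Q+n1) n2))
        (fun q => (P q ω - P (Q+n1) ω)^2)) :=
      hS2.const_mul _
    have hg3 : Integrable (fun ω => K * (P (Q+n1) ω - P Q ω)^2) := hcint.const_mul _
    have hg23 : Integrable (fun ω => (1+δ) * (Finset.Icc (Q+n1) (Q+n1+n2)).sup'
        (Finset.nonempty_Icc.mpr (Nat.le_add_right (Q+n1) n2))
        (fun q => (P q ω - P (Q+n1) ω)^2) + K * (P (Q+n1) ω - P Q ω)^2) := hg2.add hg3
    have h1 := integral_mono hS hRHSint hpt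
    rw [integral_add hS1 hg23, integral_add hg2 hg3,
        integral_const_mul, integral_const_mul] at h1
    have ih1 := ih n1 hn1lt Ω ‹MeasureSpace Ω› P Q C
      (fun q hq1 hq2 => hmem q hq1 (by omega))
      (fun L U hL hLU hU => hinc L U hL hLU (by omega))
    have ih2 := ih n2 hn2lt Ω ‹MeasureSpace Ω› P (Q+n1) C
      (fun q hq1 hq2 => hmem q (by omega) (by omega))
      (fun L U hL hLU hU => hinc L U (by omega) hLU (by omega))
    have hc2 : (∫ ω, (P (Q+n1) ω - P Q ω)^2) ≤ C * (n1:ℝ) := by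
      have h := hinc Q (Q+n1) le_rfl (Nat.le_add_right _ _) (by omega)
      have hcast : ((Q+n1:ℕ):ℝ) - (Q:ℝ) = (n1:ℝ) := by push_cast; ring
      rwa [hcast] at h
    have hx : (n1:ℝ) ≤ ((n:ℝ) + 1)/2 := by
      rw [le_div_iff₀ (by norm_num : (0:ℝ) < 2)]
      have : n1 * 2 ≤ n + 1 := by omega
      exact_mod_cast this
    have hy : (n2:ℝ) ≤ (n:ℝ)/2 := by
      rw [le_div_iff₀ (by norm_num : (0:ℝ) < 2)]
      have : n2 * 2 ≤ n := by omega
      exact_mod_cast this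
    have hka := key_arith θ δ K A (n:ℝ) (n1:ℝ) (n2:ℝ) hθ hδ hδ2 hn1R
      (hNbound n hnN) (Nat.cast_nonneg _) (Nat.cast_nonneg _) hx hy hA1 hK0
    have hfin := mul_le_mul_of_nonneg_left hka hC0
    have t2 : (1+δ) * (∫ ω, (Finset.Icc (Q+n1) (Q+n1+n2)).sup'
        (Finset.nonempty_Icc.mpr (Nat.le_add_right (Q+n1) n2))
        (fun q => (P q ω - P (Q+n1) ω)^2)) ≤ (1+δ) * (C * A * (n2:ℝ)^θ) :=
      mul_le_mul_of_nonneg_left ih2 (by linarith)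
    have t3 : K * (∫ ω, (P (Q+n1) ω - P Q ω)^2) ≤ K * (C * (n1:ℝ)) :=
      mul_le_mul_of_nonneg_left hc2 hK0
    linarith [h1, ih1, t2, t3, hfin]

/-- Móricz-type maximal inequality: if the increments of a square-integrable discrete
process satisfy `E[(P(U)−P(L))²] ≤ C(U−L)`, then for every `ζ > 0` there is a constant
`C_ζ` depending only on `ζ` with
`E[max_{Q≤q≤R}(P(q)−P(Q))²] ≤ C·C_ζ·(R−Q)^{1+ζ}`. -/
theorem moricz_maximal_inequality
    (ζ : ℝ) (hζ : 0 < ζ) :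
    ∃ Cζ : ℝ, 0 < Cζ ∧
      ∀ (Ω : Type) (_ : MeasureSpace Ω) (_ : IsProbabilityMeasure (volume : Measure Ω))
        (P : ℕ → Ω → ℝ) (Q R : ℕ) (hQR : Q < R) (C : ℝ),
        (∀ q, Q ≤ q → q ≤ R → MemLp (P q) 2 volume) →
        (∀ L U, Q ≤ L → L ≤ U → U ≤ R →
          (∫ ω, (P U ω - P L ω) ^ 2) ≤ C * ((U : ℝ) - (L : ℝ))) →
        (∫ ω, (Finset.Icc Q R).sup' (Finset.nonempty_Icc.mpr hQR.le)
            (fun q => (P q ω - P Q ω) ^ 2)) ≤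
          C * Cζ * ((R : ℝ) - (Q : ℝ)) ^ (1 + ζ) := by
  set θ : ℝ := 1 + ζ with hθdef
  have hθ : 1 < θ := by rw [hθdef]; linarith
  have h2θ : (2:ℝ) < 2 ^ θ := by
    calc (2:ℝ) = 2 ^ (1:ℝ) := (Real.rpow_one 2).symm
      _ < 2 ^ θ := Real.rpow_lt_rpow_of_exponent_lt one_lt_two hθ
  set δ : ℝ := (2 ^ θ - 2)/2 with hδdef
  have hδ : 0 < δ := by rw [hδdef]; linarith
  have hδ2 : 2 * δ = 2 ^ θ - 2 := by rw [hδdef]; ring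
  set K : ℝ := 1 + 1/δ with hKdef
  set N : ℕ := ⌈θ / Real.log (1 + δ/2)⌉₊ + 1 with hNdef
  have hN1 : 1 ≤ N := by omega
  have hNbound : ∀ n : ℕ, N < n → (1 + 1/(n:ℝ)) ^ θ ≤ 1 + δ/2 := by
    intro n hn
    apply one_add_inv_rpow_le θ δ (by linarith) hδ
    · calc θ / Real.log (1 + δ/2) ≤ (⌈θ / Real.log (1 + δ/2)⌉₊ : ℝ) := Nat.le_ceil _
        _ ≤ (N:ℝ) := by rw [hNdef]; push_cast; linarith
        _ ≤ (n:ℝ) := by exact_mod_cast hn.le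
    · have : 0 < n := by omega
      exact_mod_cast this
  set A : ℝ := max (2 * (K + 1) * 2 ^ θ / δ) (2 * (N:ℝ) + 2) with hAdef
  have hA1 : 2 * (K + 1) * 2 ^ θ / δ ≤ A := le_max_left _ _
  have hA2 : 2 * (N:ℝ) + 2 ≤ A := le_max_right _ _
  have hApos : 0 < A := lt_of_lt_of_le (by positivity) hA2
  refine ⟨A, hApos, ?_⟩
  intro Ω inst instP P Q R hQR C hmem hinc
  obtain ⟨n, rfl⟩ : ∃ n, R = Q + n := ⟨R - Q, by omega⟩
  have hcast : ((Q + n : ℕ):ℝ) - (Q:ℝ) = (n:ℝ) := by push_cast; ring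
  rw [hcast]
  exact moricz_aux θ δ K A N hθ hδ hδ2 hKdef hN1 hNbound hA1 hA2 n Ω inst P Q C hmem hinc
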